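/- Let (M, d) be a metric space that is geodesic in the sense that for all a, b ∈ M there exists γ : ℝ → M with γ(0) = a, γ(1) = b, and d(γ(s), γ(t)) = d(a,b)·|s − t| for all s, t ∈ [0,1]. Let G be a compact topological group acting continuously on M by isometries and fix n ≥ 1. Then the quotient formation space is geodesic: for all configurations x, y : Fin n → M there exists Γ : ℝ → M^n with Γ(0) = x, Γ(1) in the (G × S_n)-orbit of y, and D(Γ(s), Γ(t)) = D(x,y)·|s − t| for all s, t ∈ [0,1]. -/

import Mathlib

open Set

section FormAux

variable {M : Type*} [MetricSpace M] {G : Type*} [Group G] [MulAction G M] {n : ℕ}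

/-- auxiliary: matching cost for a fixed group element and permutation. -/
noncomputable def formF (a b : Fin n → M) (p : G × Equiv.Perm (Fin n)) : ℝ :=
  ⨆ i, dist (p.1 • a i) (b (p.2 i))

/-- auxiliary: formation matching distance. -/
noncomputable def formD (G : Type*) [Group G] [MulAction G M] (a b : Fin n → M) : ℝ :=
  ⨅ p : G × Equiv.Perm (Fin n), formF a b p

lemma formF_nonneg (a b : Fin n → M) (p : G × Equiv.Perm (Fin n)) :
    0 ≤ formF a b p :=
  Real.iSup_nonneg fun _ => dist_nonneg

lemma bddBelow_formF (a b : Fin n → M) :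
    BddBelow (range (formF (G := G) a b)) :=
  ⟨0, by rintro r ⟨p, rfl⟩; exact formF_nonneg a b p⟩

lemma formD_le (a b : Fin n → M) (p : G × Equiv.Perm (Fin n)) :
    formD G a b ≤ formF a b p :=
  ciInf_le (bddBelow_formF a b) p

lemma le_formD {r : ℝ} (a b : Fin n → M)
    (h : ∀ p : G × Equiv.Perm (Fin n), r ≤ formF a b p) : r ≤ formD G a b :=
  le_ciInf h

lemma le_formF [Nonempty (Fin n)] (a b : Fin n → M) (p : G × Equiv.Perm (Fin n))
    (i : Fin n) : dist (p.1 • a i) (b (p.2 i)) ≤ formF a b p :=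
  le_ciSup (f := fun j => dist (p.1 • a j) (b (p.2 j))) ((Set.finite_range _).bddAbove) i

lemma formF_le [Nonempty (Fin n)] {r : ℝ} (a b : Fin n → M) (p : G × Equiv.Perm (Fin n))
    (h : ∀ i, dist (p.1 • a i) (b (p.2 i)) ≤ r) : formF a b p ≤ r :=
  ciSup_le h

lemma iSup_perm_comp (h : Fin n → ℝ) (e : Equiv.Perm (Fin n)) :
    (⨆ i, h (e i)) = ⨆ i, h i := by
  rw [iSup, iSup]
  congr 1
  exact e.surjective.range_comp h

variable (hiso : ∀ (g : G) (p q : M), dist (g • p) (g • q) = dist p q)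

include hiso in
lemma formD_triangle [Nonempty (Fin n)] (a b c : Fin n → M) :
    formD G a c ≤ formD G a b + formD G b c := by
  have key : ∀ p q : G × Equiv.Perm (Fin n), formD G a c ≤ formF a b p + formF b c q := by
    intro p q
    refine (formD_le a c (q.1 * p.1, p.2.trans q.2)).trans ?_
    refine formF_le _ _ _ fun i => ?_
    have h1 : dist ((q.1 * p.1) • a i) (c ((p.2.trans q.2) i)) ≤
        dist (p.1 • a i) (b (p.2 i)) + dist (q.1 • b (p.2 i)) (c (q.2 (p.2 i))) := by
      have h2 := dist_triangle ((q.1 * p.1) • a i) (q.1 • b (p.2 i)) (c (q.2 (p.2 i)))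
      have h3 : dist ((q.1 * p.1) • a i) (q.1 • b (p.2 i)) =
          dist (p.1 • a i) (b (p.2 i)) := by
        rw [mul_smul, hiso]
      rw [h3] at h2
      simpa using h2
    exact h1.trans (add_le_add (le_formF (G := G) a b p i) (le_formF (G := G) b c q (p.2 i)))
  have h2 : ∀ p : G × Equiv.Perm (Fin n), formD G a c - formD G b c ≤ formF a b p := by
    intro p
    have h3 : formD G a c - formF a b p ≤ formD G b c :=
      le_formD _ _ fun q => by linarith [key p q]
    linarith
  have h4 := le_formD _ _ h2
  linarith

include hiso in
lemma formD_symm_le (a b : Fin n → M) : formD G a b ≤ formD G b a := by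
  refine le_formD _ _ fun p => ?_
  refine (formD_le a b (p.1⁻¹, p.2⁻¹)).trans_eq ?_
  show (⨆ i, dist (p.1⁻¹ • a i) (b (p.2⁻¹ i))) = ⨆ i, dist (p.1 • b i) (a (p.2 i))
  rw [← iSup_perm_comp (fun i => dist (p.1⁻¹ • a i) (b (p.2⁻¹ i))) p.2]
  refine iSup_congr fun j => ?_
  have h1 : dist (p.1⁻¹ • a (p.2 j)) (b (p.2⁻¹ (p.2 j))) =
      dist (p.1⁻¹ • a (p.2 j)) (b j) := by
    rw [Equiv.Perm.inv_def, Equiv.symm_apply_apply]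
  rw [h1, ← hiso p.1, smul_inv_smul, dist_comm]

include hiso in
lemma formD_symm (a b : Fin n → M) : formD G a b = formD G b a :=
  le_antisymm (formD_symm_le hiso a b) (formD_symm_le hiso b a)

lemma iSup_dist_eq [Nonempty (Fin n)] (a b : Fin n → M) :
    (⨆ i, dist (a i) (b i)) = dist a b := by
  refine le_antisymm (ciSup_le fun i => dist_le_pi_dist a b i) ?_
  rw [dist_pi_le_iff (Real.iSup_nonneg fun i => dist_nonneg)]
  exact fun i => le_ciSup (f := fun j => dist (a j) (b j)) ((Set.finite_range _).bddAbove) i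

end FormAux

/-- if `(M,d)` is geodesic and `G` is a compact topological group acting
continuously by isometries, then the quotient formation space is geodesic: between any
two configurations there is a path, starting at `x` and ending in the `(G × Sₙ)`-orbit
of `y`, along which the formation matching distance `D` is affine. -/
theorem stmt_11 {M : Type*} [MetricSpace M] {G : Type*} [Group G]
    [TopologicalSpace G] [IsTopologicalGroup G] [CompactSpace G]
    [MulAction G M] [ContinuousSMul G M]
    (hiso : ∀ (g : G) (p q : M), dist (g • p) (g • q) = dist p q)
    (hgeo : ∀ a b : M, ∃ γ : ℝ → M, γ 0 = a ∧ γ 1 = b ∧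
      ∀ s ∈ Set.Icc (0:ℝ) 1, ∀ t ∈ Set.Icc (0:ℝ) 1,
        dist (γ s) (γ t) = dist a b * |s - t|)
    {n : ℕ} (hn : 1 ≤ n) (x y : Fin n → M) :
    ∃ Γ : ℝ → Fin n → M, Γ 0 = x ∧
      (∃ (g : G) (σ : Equiv.Perm (Fin n)), ∀ i, Γ 1 i = g • y (σ⁻¹ i)) ∧
      ∀ s ∈ Set.Icc (0:ℝ) 1, ∀ t ∈ Set.Icc (0:ℝ) 1,
        (⨅ p : G × Equiv.Perm (Fin n), ⨆ i : Fin n, dist (p.1 • Γ s i) (Γ t (p.2 i))) =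
          (⨅ p : G × Equiv.Perm (Fin n), ⨆ i : Fin n, dist (p.1 • x i) (y (p.2 i)))
            * |s - t| := by
  classical
  haveI : Nonempty (Fin n) := Fin.pos_iff_nonempty.mp hn
  -- the infimum is attained
  have hmin : ∀ σ : Equiv.Perm (Fin n), ∃ g : G,
      ∀ g' : G, formF x y ((g, σ) : G × Equiv.Perm (Fin n)) ≤ formF x y ((g', σ) : G × Equiv.Perm (Fin n)) := by
    intro σ
    have hc : Continuous fun g : G => formF x y (g, σ) := by
      have he : (fun g : G => formF x y (g, σ)) =
          fun g : G => dist (fun i => g • x i) (fun i => y (σ i)) := by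
        funext g
        exact iSup_dist_eq _ _
      rw [he]
      exact Continuous.dist (continuous_pi fun i => continuous_id.smul continuous_const)
        continuous_const
    obtain ⟨g, -, hg⟩ := isCompact_univ.exists_isMinOn (Set.univ_nonempty) hc.continuousOn
    exact ⟨g, fun g' => hg (Set.mem_univ g')⟩
  choose gm hgm using hmin
  obtain ⟨σ₀, hσ₀⟩ := Finite.exists_min fun σ => formF (G := G) x y (gm σ, σ)
  set g₀ := gm σ₀ with hg₀def
  have hopt : ∀ p, formF x y (g₀, σ₀) ≤ formF x y p := fun p => (hσ₀ p.2).trans (hgm p.2 p.1)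
  have hDxy : formD G x y = formF x y (g₀, σ₀) :=
    le_antisymm (formD_le x y _) (le_formD x y hopt)
  -- geodesics
  have hg : ∀ i, ∃ γ : ℝ → M, γ 0 = x i ∧ γ 1 = g₀⁻¹ • y (σ₀ i) ∧
      ∀ s ∈ Set.Icc (0:ℝ) 1, ∀ t ∈ Set.Icc (0:ℝ) 1,
        dist (γ s) (γ t) = dist (x i) (g₀⁻¹ • y (σ₀ i)) * |s - t| :=
    fun i => hgeo (x i) (g₀⁻¹ • y (σ₀ i))
  choose γ hγ0 hγ1 hγd using hg
  have hcD : (⨆ i, dist (x i) (g₀⁻¹ • y (σ₀ i))) = formD G x y := by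
    rw [hDxy]
    refine iSup_congr fun i => ?_
    show dist (x i) (g₀⁻¹ • y (σ₀ i)) = dist (g₀ • x i) (y (σ₀ i))
    rw [← hiso g₀ (x i) (g₀⁻¹ • y (σ₀ i)), smul_inv_smul]
  -- sup of (dist …) * r
  have hsup : ∀ r : ℝ, 0 ≤ r →
      (⨆ i, dist (x i) (g₀⁻¹ • y (σ₀ i)) * r) = formD G x y * r := by
    intro r hr
    rw [← Real.iSup_mul_of_nonneg hr, hcD]
  refine ⟨fun t i => γ i t, funext fun i => hγ0 i, ⟨g₀⁻¹, σ₀⁻¹, fun i => by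
      simp [hγ1 i]⟩, ?_⟩
  intro s hs t ht
  show formD G (fun i => γ i s) (fun i => γ i t) = formD G x y * |s - t|
  -- endpoint estimates
  have hend1 : ∀ u ∈ Set.Icc (0:ℝ) 1, formD G x (fun i => γ i u) ≤ formD G x y * u := by
    intro u hu
    refine le_trans (formD_le x (fun i => γ i u) (1, 1)) (le_of_eq ?_)
    show (⨆ i, dist ((1 : G) • x i) (γ i u)) = formD G x y * u
    rw [← hsup u hu.1]
    refine iSup_congr fun i => ?_
    rw [one_smul]
    have h := hγd i 0 (Set.left_mem_Icc.mpr zero_le_one) u hu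
    rw [hγ0 i] at h
    rw [h, zero_sub, abs_neg, abs_of_nonneg hu.1]
  have hend2 : ∀ u ∈ Set.Icc (0:ℝ) 1, formD G (fun i => γ i u) y ≤ formD G x y * (1 - u) := by
    intro u hu
    refine le_trans (formD_le (fun i => γ i u) y (g₀, σ₀)) (le_of_eq ?_)
    show (⨆ i, dist (g₀ • γ i u) (y (σ₀ i))) = formD G x y * (1 - u)
    rw [← hsup (1 - u) (by linarith [hu.2])]
    refine iSup_congr fun i => ?_
    have hy : y (σ₀ i) = g₀ • γ i 1 := by rw [hγ1 i, smul_inv_smul]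
    rw [hy, hiso, inv_smul_smul]
    have h := hγd i u hu 1 (Set.right_mem_Icc.mpr zero_le_one)
    rw [← hγ1 i] at h
    rw [h, abs_of_nonpos (by linarith [hu.2] : u - 1 ≤ 0)]
    ring
  -- upper bound
  have hub : formD G (fun i => γ i s) (fun i => γ i t) ≤ formD G x y * |s - t| := by
    refine le_trans (formD_le (fun i => γ i s) (fun i => γ i t) (1, 1)) (le_of_eq ?_)
    show (⨆ i, dist ((1 : G) • γ i s) (γ i t)) = formD G x y * |s - t|
    rw [← hsup _ (abs_nonneg (s - t))]
    refine iSup_congr fun i => ?_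
    rw [one_smul, hγd i s hs t ht]
  -- lower bound
  have hlb : formD G x y * |s - t| ≤ formD G (fun i => γ i s) (fun i => γ i t) := by
    rcases le_total s t with hst | hst
    · have h1 := formD_triangle hiso x (fun i => γ i s) y
      have h2 := formD_triangle hiso (fun i => γ i s) (fun i => γ i t) y
      have h3 := hend1 s hs
      have h4 := hend2 t ht
      have habs : |s - t| = t - s := by rw [abs_of_nonpos (by linarith)]; ring
      rw [habs]
      nlinarith [h1, h2, h3, h4]
    · have h1 := formD_triangle hiso x (fun i => γ i t) y
      have h2 := formD_triangle hiso (fun i => γ i t) (fun i => γ i s) y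
      have h3 := hend1 t ht
      have h4 := hend2 s hs
      have h5 := formD_symm hiso (fun i => γ i t) (fun i => γ i s)
      have habs : |s - t| = s - t := abs_of_nonneg (by linarith)
      rw [habs]
      nlinarith [h1, h2, h3, h4, h5]
  exact le_antisymm hub hlb
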